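/- arXiv:2604.04394 — 3 statements merged into one kernel-verified Lean document; each statement's English description precedes it below -/
import Mathlib

section
/- Sandwich/monotonicity of the upper comparison iteration: Suppose Q_{k+1}(s,a,b) − Q_*(s,a,b) = γ Σ_{s'} P(s'|s,a,b)[Q_k(s', a_k(s'), b_k(s',a_k(s'))) − Q_*(s', a_*(s'), b_*(s',a_*(s')))] and Q^U_{k+1}(s,a,b) − Q_*(s,a,b) = γ Σ_{s'} P(s'|s,a,b)[Q^U_k(s', a_k(s'), b_*(s',a_k(s'))) − Q_*(s', a_k(s'), b_*(s',a_k(s')))] + γε. Under (i) Q_*(s, a_k(s), b_*(s,a_k(s))) ≤ Q_*(s, a_*(s), b_*(s,a_*(s))) for all s, (ii) Q_k(s, a_k(s), b_k(s,a_k(s))) ≤ Q_k(s, a_k(s), b_*(s,a_k(s))) + ε for all s, and (iii) Q^U_0 ≥ Q_0 pointwise, it holds that Q^U_k(s,a,b) ≥ Q_k(s,a,b) for all (s,a,b) and all k ≥ 0. -/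
theorem stmt8 {S A B : Type*} [Fintype S] [Fintype A] [Fintype B]
    [Nonempty S] [Nonempty A] [Nonempty B]
    (γ ε : ℝ) (hγ0 : 0 ≤ γ) (hγ1 : γ < 1) (hε : 0 < ε)
    (P : S → A → B → S → ℝ)
    (hPnn : ∀ s a b s', 0 ≤ P s a b s')
    (hPsum : ∀ s a b, ∑ s', P s a b s' = 1)
    (Q QU : ℕ → S → A → B → ℝ) (Qstar : S → A → B → ℝ)
    (ak : ℕ → S → A) (bk : ℕ → S → A → B) (astar : S → A) (bstar : S → A → B)
    (hQrec : ∀ k s a b, Q (k + 1) s a b - Qstar s a b =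
      γ * ∑ s', P s a b s' *
        (Q k s' (ak k s') (bk k s' (ak k s')) - Qstar s' (astar s') (bstar s' (astar s'))))
    (hQUrec : ∀ k s a b, QU (k + 1) s a b - Qstar s a b =
      γ * ∑ s', P s a b s' *
        (QU k s' (ak k s') (bstar s' (ak k s')) - Qstar s' (ak k s') (bstar s' (ak k s')))
      + γ * ε)
    (hi : ∀ k s, Qstar s (ak k s) (bstar s (ak k s)) ≤ Qstar s (astar s) (bstar s (astar s)))
    (hii : ∀ k s, Q k s (ak k s) (bk k s (ak k s)) ≤ Q k s (ak k s) (bstar s (ak k s)) + ε)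
    (hiii : ∀ s a b, Q 0 s a b ≤ QU 0 s a b) :
    ∀ k s a b, Q k s a b ≤ QU k s a b := by
  intro k
  induction k with
  | zero => exact hiii
  | succ k ih =>
    intro s a b
    have key : ∀ s', Q k s' (ak k s') (bk k s' (ak k s'))
        - Qstar s' (astar s') (bstar s' (astar s'))
        ≤ QU k s' (ak k s') (bstar s' (ak k s'))
        - Qstar s' (ak k s') (bstar s' (ak k s')) + ε := by
      intro s'
      have h1 := hii k s'
      have h2 := ih s' (ak k s') (bstar s' (ak k s'))
      have h3 := hi k s'
      linarith
    have hsum : ∑ s', P s a b s' *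
        (Q k s' (ak k s') (bk k s' (ak k s')) - Qstar s' (astar s') (bstar s' (astar s')))
        ≤ ∑ s', P s a b s' *
        (QU k s' (ak k s') (bstar s' (ak k s')) - Qstar s' (ak k s') (bstar s' (ak k s')) + ε) := by
      apply Finset.sum_le_sum
      intro s' _
      exact mul_le_mul_of_nonneg_left (key s') (hPnn s a b s')
    have hexp : ∑ s', P s a b s' *
        (QU k s' (ak k s') (bstar s' (ak k s')) - Qstar s' (ak k s') (bstar s' (ak k s')) + ε)
        = (∑ s', P s a b s' *
        (QU k s' (ak k s') (bstar s' (ak k s')) - Qstar s' (ak k s') (bstar s' (ak k s')))) + ε := by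
      simp [mul_add, Finset.sum_add_distrib, ← Finset.sum_mul, hPsum s a b]
    have h1 := hQrec k s a b
    have h2 := hQUrec k s a b
    rw [hexp] at hsum
    nlinarith [mul_le_mul_of_nonneg_left hsum hγ0]
end

section
/- Sandwich/monotonicity of the lower comparison iteration: Suppose Q_{k+1}(s,a,b) − Q_*(s,a,b) = γ Σ_{s'} P(s'|s,a,b)[Q_k(s', a_k(s'), b_k(s',a_k(s'))) − Q_*(s', a_*(s'), b_*(s',a_*(s')))] and Q^L_{k+1}(s,a,b) − Q_*(s,a,b) = γ Σ_{s'} P(s'|s,a,b)[Q^L_k(s', a_*(s'), b_k(s',a_*(s'))) − Q_*(s', a_*(s'), b_k(s',a_*(s')))] − γε. Under (i) Q_k(s, a_*(s), b_k(s,a_*(s))) ≤ Q_k(s, a_k(s), b_k(s,a_k(s))) for all s and k, (ii) Q_*(s, a_*(s), b_*(s,a_*(s))) ≤ Q_*(s, a_*(s), b_k(s,a_*(s))) + ε for all s and k, and (iii) Q^L_0 ≤ Q_0 pointwise, it holds that Q^L_k(s,a,b) ≤ Q_k(s,a,b) for all (s,a,b) and all k ≥ 0. -/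
theorem stmt9 {S A B : Type*} [Fintype S] [Fintype A] [Fintype B]
    [Nonempty S] [Nonempty A] [Nonempty B]
    (γ ε : ℝ) (hγ0 : 0 ≤ γ) (hγ1 : γ < 1) (hε : 0 < ε)
    (P : S → A → B → S → ℝ)
    (hPnn : ∀ s a b s', 0 ≤ P s a b s')
    (hPsum : ∀ s a b, ∑ s', P s a b s' = 1)
    (Q QL : ℕ → S → A → B → ℝ) (Qstar : S → A → B → ℝ)
    (ak : ℕ → S → A) (bk : ℕ → S → A → B) (astar : S → A) (bstar : S → A → B)
    (hQrec : ∀ k s a b, Q (k + 1) s a b - Qstar s a b =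
      γ * ∑ s', P s a b s' *
        (Q k s' (ak k s') (bk k s' (ak k s')) - Qstar s' (astar s') (bstar s' (astar s'))))
    (hQLrec : ∀ k s a b, QL (k + 1) s a b - Qstar s a b =
      γ * ∑ s', P s a b s' *
        (QL k s' (astar s') (bk k s' (astar s')) - Qstar s' (astar s') (bk k s' (astar s')))
      - γ * ε)
    (hi : ∀ k s, Q k s (astar s) (bk k s (astar s)) ≤ Q k s (ak k s) (bk k s (ak k s)))
    (hii : ∀ k s, Qstar s (astar s) (bstar s (astar s)) ≤
      Qstar s (astar s) (bk k s (astar s)) + ε)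
    (hiii : ∀ s a b, QL 0 s a b ≤ Q 0 s a b) :
    ∀ k s a b, QL k s a b ≤ Q k s a b := by
  intro k
  induction k with
  | zero => exact hiii
  | succ k ih =>
    intro s a b
    have key : QL (k+1) s a b - Qstar s a b ≤ Q (k+1) s a b - Qstar s a b := by
      rw [hQrec, hQLrec]
      have hsum : ∑ s', P s a b s' *
          (QL k s' (astar s') (bk k s' (astar s')) - Qstar s' (astar s') (bk k s' (astar s')))
          ≤ ∑ s', P s a b s' *
          (Q k s' (ak k s') (bk k s' (ak k s')) - Qstar s' (astar s') (bstar s' (astar s')) + ε) := by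
        apply Finset.sum_le_sum
        intro s' _
        apply mul_le_mul_of_nonneg_left _ (hPnn s a b s')
        have h1 : QL k s' (astar s') (bk k s' (astar s')) ≤ Q k s' (ak k s') (bk k s' (ak k s')) :=
          (ih s' (astar s') (bk k s' (astar s'))).trans (hi k s')
        have h2 := hii k s'
        linarith
      have hexp : ∑ s', P s a b s' *
          (Q k s' (ak k s') (bk k s' (ak k s')) - Qstar s' (astar s') (bstar s' (astar s')) + ε)
          = (∑ s', P s a b s' *
          (Q k s' (ak k s') (bk k s' (ak k s')) - Qstar s' (astar s') (bstar s' (astar s')))) + ε := by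
        simp [mul_add, Finset.sum_add_distrib, ← Finset.sum_mul, hPsum s a b]
      rw [hexp] at hsum
      nlinarith [mul_le_mul_of_nonneg_left hsum hγ0]
    linarith
end

section
/- Finite-time error bound for Stackelberg Q-value iteration (main theorem): Under the setting of the upper and lower comparison systems, for all k ≥ 0, ‖Q¹_k − Q¹_*‖_∞ ≤ (6/(1-γ)) γ^k + 3ε/(1-γ). -/
theorem stmt10 {S A B : Type*} [Fintype S] [Fintype A] [Fintype B]
    [Nonempty S] [Nonempty A] [Nonempty B]
    (γ ε : ℝ) (hγ0 : 0 ≤ γ) (hγ1 : γ < 1) (hε : 0 < ε)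
    (P : S → A → B → S → ℝ)
    (hPnn : ∀ s a b s', 0 ≤ P s a b s')
    (hPsum : ∀ s a b, ∑ s', P s a b s' = 1)
    (r1 : S → A → B → ℝ) (hr1 : ∀ s a b, |r1 s a b| ≤ 1)
    (Q1 Q2 : ℕ → S → A → B → ℝ)
    (hQ10 : ∀ s a b, |Q1 0 s a b| ≤ 1)
    (ak : ℕ → S → A) (bk : ℕ → S → A → B) (astar : S → A) (bstar : S → A → B)
    (Q1star : S → A → B → ℝ)
    -- follower best response: b_k(s,a) ∈ argmax_b Q²_k(s,a,b)
    (hbk : ∀ k s a b, Q2 k s a b ≤ Q2 k s a (bk k s a))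
    -- leader: a_k(s) ∈ argmax_a Q¹_k(s,a,b_k(s,a))
    (hak : ∀ k s a, Q1 k s a (bk k s a) ≤ Q1 k s (ak k s) (bk k s (ak k s)))
    -- Stackelberg Q-value iteration for the leader
    (hQ1rec : ∀ k s a b, Q1 (k + 1) s a b =
      r1 s a b + γ * ∑ s', P s a b s' * Q1 k s' (ak k s') (bk k s' (ak k s')))
    -- Q¹_* is the fixed point associated with the equilibrium (a_*, b_*)
    (hstarrec : ∀ s a b, Q1star s a b =
      r1 s a b + γ * ∑ s', P s a b s' * Q1star s' (astar s') (bstar s' (astar s')))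
    -- equilibrium optimality of a_* (Lemma 1 for Q¹_*)
    (hastar : ∀ s a, Q1star s a (bstar s a) ≤ Q1star s (astar s) (bstar s (astar s)))
    -- ε-relaxed best response assumption
    (hrelax : ∀ k s (μ2 : S → B),
      Q1 k s (ak k s) (bk k s (ak k s)) ≤ Q1 k s (ak k s) (μ2 s) + ε)
    (hrelaxstar : ∀ s (μ2 : S → B),
      Q1star s (astar s) (bstar s (astar s)) ≤ Q1star s (astar s) (μ2 s) + ε)
    -- upper and lower comparison systems
    (QU QL : ℕ → S → A → B → ℝ)
    (hQUrec : ∀ k s a b, QU (k + 1) s a b - Q1star s a b =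
      γ * ∑ s', P s a b s' *
        (QU k s' (ak k s') (bstar s' (ak k s')) - Q1star s' (ak k s') (bstar s' (ak k s')))
      + γ * ε)
    (hQLrec : ∀ k s a b, QL (k + 1) s a b - Q1star s a b =
      γ * ∑ s', P s a b s' *
        (QL k s' (astar s') (bk k s' (astar s')) - Q1star s' (astar s') (bk k s' (astar s')))
      - γ * ε)
    (hinit : ∀ s a b, QL 0 s a b ≤ Q1 0 s a b ∧ Q1 0 s a b ≤ QU 0 s a b)
    (hU0 : ∀ s a b, |QU 0 s a b| ≤ 1 / (1 - γ))
    (hL0 : ∀ s a b, |QL 0 s a b| ≤ 1 / (1 - γ)) :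
    ∀ k s a b, |Q1 k s a b - Q1star s a b| ≤ (6 / (1 - γ)) * γ ^ k + 3 * ε / (1 - γ) := by
  have h1γ : 0 < 1 - γ := by linarith
  -- generic sum bounds
  have sumle : ∀ (s : S) (a : A) (b : B) (f : S → ℝ) (M : ℝ),
      (∀ s', f s' ≤ M) → ∑ s', P s a b s' * f s' ≤ M := by
    intro s a b f M hf
    calc ∑ s', P s a b s' * f s' ≤ ∑ s', P s a b s' * M :=
          Finset.sum_le_sum fun s' _ => mul_le_mul_of_nonneg_left (hf s') (hPnn s a b s')
      _ = M := by rw [← Finset.sum_mul, hPsum s a b, one_mul]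
  have sumge : ∀ (s : S) (a : A) (b : B) (f : S → ℝ) (M : ℝ),
      (∀ s', M ≤ f s') → M ≤ ∑ s', P s a b s' * f s' := by
    intro s a b f M hf
    calc M = ∑ s', P s a b s' * M := by rw [← Finset.sum_mul, hPsum s a b, one_mul]
      _ ≤ ∑ s', P s a b s' * f s' :=
          Finset.sum_le_sum fun s' _ => mul_le_mul_of_nonneg_left (hf s') (hPnn s a b s')
  have habs_sub : ∀ x y : ℝ, |x - y| ≤ |x| + |y| := by
    intro x y
    calc |x - y| = |x + -y| := by rw [sub_eq_add_neg]
      _ ≤ |x| + |-y| := abs_add_le _ _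
      _ = |x| + |y| := by rw [abs_neg]
  -- bound on Q1star
  obtain ⟨⟨s0, a0, b0⟩, hmax⟩ :=
    Finite.exists_max (fun p : S × A × B => |Q1star p.1 p.2.1 p.2.2|)
  have hM : ∀ s a b, |Q1star s a b| ≤ |Q1star s0 a0 b0| := fun s a b => hmax (s, a, b)
  have hstarbd : ∀ s a b, |Q1star s a b| ≤ 1 / (1 - γ) := by
    have hsum : |∑ s', P s0 a0 b0 s' * Q1star s' (astar s') (bstar s' (astar s'))| ≤
        |Q1star s0 a0 b0| := by
      rw [abs_le]
      constructor
      · exact sumge _ _ _ _ _ fun s' => (abs_le.mp (hM s' _ _)).1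
      · exact sumle _ _ _ _ _ fun s' => (abs_le.mp (hM s' _ _)).2
    have hM0 : |Q1star s0 a0 b0| ≤ 1 + γ * |Q1star s0 a0 b0| := by
      calc |Q1star s0 a0 b0|
          = |r1 s0 a0 b0 + γ * ∑ s', P s0 a0 b0 s' *
              Q1star s' (astar s') (bstar s' (astar s'))| := by rw [← hstarrec]
        _ ≤ |r1 s0 a0 b0| + |γ * ∑ s', P s0 a0 b0 s' *
              Q1star s' (astar s') (bstar s' (astar s'))| := abs_add_le _ _
        _ = |r1 s0 a0 b0| + γ * |∑ s', P s0 a0 b0 s' *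
              Q1star s' (astar s') (bstar s' (astar s'))| := by
              rw [abs_mul, abs_of_nonneg hγ0]
        _ ≤ 1 + γ * |Q1star s0 a0 b0| :=
              add_le_add (hr1 s0 a0 b0) (mul_le_mul_of_nonneg_left hsum hγ0)
    have hMbd : |Q1star s0 a0 b0| ≤ 1 / (1 - γ) := by
      rw [le_div_iff₀ h1γ]
      nlinarith [hM0]
    exact fun s a b => (hM s a b).trans hMbd
  have hE : 0 ≤ ε / (1 - γ) := div_nonneg hε.le h1γ.le
  -- key recursion on the bound
  have hDkey : ∀ k : ℕ, γ * (2 / (1 - γ) * γ ^ k + ε / (1 - γ)) + γ * ε ≤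
      2 / (1 - γ) * γ ^ (k + 1) + ε / (1 - γ) := by
    intro k
    have h : (2 / (1 - γ) * γ ^ (k + 1) + ε / (1 - γ)) -
        (γ * (2 / (1 - γ) * γ ^ k + ε / (1 - γ)) + γ * ε) = ε * (1 - γ) := by
      field_simp
      ring
    nlinarith [mul_nonneg hε.le h1γ.le]
  -- bound for the upper comparison system
  have boundU : ∀ k s a b, |QU k s a b - Q1star s a b| ≤
      2 / (1 - γ) * γ ^ k + ε / (1 - γ) := by
    intro k
    induction k with
    | zero =>
      intro s a b
      have h1 := hU0 s a b
      have h2 := hstarbd s a b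
      have h3 := habs_sub (QU 0 s a b) (Q1star s a b)
      have h4 : (2 : ℝ) / (1 - γ) = 1 / (1 - γ) + 1 / (1 - γ) := by ring
      simp only [pow_zero, mul_one]
      linarith
    | succ k ih =>
      intro s a b
      have hrec := hQUrec k s a b
      have hub : (∑ s', P s a b s' * (QU k s' (ak k s') (bstar s' (ak k s')) -
          Q1star s' (ak k s') (bstar s' (ak k s')))) ≤ 2 / (1 - γ) * γ ^ k + ε / (1 - γ) :=
        sumle s a b _ _ fun s' => (abs_le.mp (ih s' _ _)).2
      have hlb : -(2 / (1 - γ) * γ ^ k + ε / (1 - γ)) ≤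
          ∑ s', P s a b s' * (QU k s' (ak k s') (bstar s' (ak k s')) -
          Q1star s' (ak k s') (bstar s' (ak k s'))) :=
        sumge s a b _ _ fun s' => (abs_le.mp (ih s' _ _)).1
      have hSabs : |∑ s', P s a b s' * (QU k s' (ak k s') (bstar s' (ak k s')) -
          Q1star s' (ak k s') (bstar s' (ak k s')))| ≤ 2 / (1 - γ) * γ ^ k + ε / (1 - γ) :=
        abs_le.mpr ⟨hlb, hub⟩
      have habs : |QU (k + 1) s a b - Q1star s a b| ≤
          γ * |∑ s', P s a b s' * (QU k s' (ak k s') (bstar s' (ak k s')) -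
          Q1star s' (ak k s') (bstar s' (ak k s')))| + γ * ε := by
        rw [hrec]
        calc |γ * (∑ s', P s a b s' * (QU k s' (ak k s') (bstar s' (ak k s')) -
              Q1star s' (ak k s') (bstar s' (ak k s')))) + γ * ε|
            ≤ |γ * (∑ s', P s a b s' * (QU k s' (ak k s') (bstar s' (ak k s')) -
              Q1star s' (ak k s') (bstar s' (ak k s'))))| + |γ * ε| := abs_add_le _ _
          _ = γ * |∑ s', P s a b s' * (QU k s' (ak k s') (bstar s' (ak k s')) -
              Q1star s' (ak k s') (bstar s' (ak k s')))| + γ * ε := by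
              rw [abs_mul, abs_mul, abs_of_nonneg hγ0, abs_of_nonneg hε.le]
      have hmul := mul_le_mul_of_nonneg_left hSabs hγ0
      have hkey := hDkey k
      linarith
  -- bound for the lower comparison system
  have boundL : ∀ k s a b, |QL k s a b - Q1star s a b| ≤
      2 / (1 - γ) * γ ^ k + ε / (1 - γ) := by
    intro k
    induction k with
    | zero =>
      intro s a b
      have h1 := hL0 s a b
      have h2 := hstarbd s a b
      have h3 := habs_sub (QL 0 s a b) (Q1star s a b)
      have h4 : (2 : ℝ) / (1 - γ) = 1 / (1 - γ) + 1 / (1 - γ) := by ring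
      simp only [pow_zero, mul_one]
      linarith
    | succ k ih =>
      intro s a b
      have hrec := hQLrec k s a b
      have hub : (∑ s', P s a b s' * (QL k s' (astar s') (bk k s' (astar s')) -
          Q1star s' (astar s') (bk k s' (astar s')))) ≤ 2 / (1 - γ) * γ ^ k + ε / (1 - γ) :=
        sumle s a b _ _ fun s' => (abs_le.mp (ih s' _ _)).2
      have hlb : -(2 / (1 - γ) * γ ^ k + ε / (1 - γ)) ≤
          ∑ s', P s a b s' * (QL k s' (astar s') (bk k s' (astar s')) -
          Q1star s' (astar s') (bk k s' (astar s'))) :=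
        sumge s a b _ _ fun s' => (abs_le.mp (ih s' _ _)).1
      have hSabs : |∑ s', P s a b s' * (QL k s' (astar s') (bk k s' (astar s')) -
          Q1star s' (astar s') (bk k s' (astar s')))| ≤ 2 / (1 - γ) * γ ^ k + ε / (1 - γ) :=
        abs_le.mpr ⟨hlb, hub⟩
      have habs : |QL (k + 1) s a b - Q1star s a b| ≤
          γ * |∑ s', P s a b s' * (QL k s' (astar s') (bk k s' (astar s')) -
          Q1star s' (astar s') (bk k s' (astar s')))| + γ * ε := by
        rw [hrec]
        calc |γ * (∑ s', P s a b s' * (QL k s' (astar s') (bk k s' (astar s')) -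
              Q1star s' (astar s') (bk k s' (astar s')))) - γ * ε|
            ≤ |γ * (∑ s', P s a b s' * (QL k s' (astar s') (bk k s' (astar s')) -
              Q1star s' (astar s') (bk k s' (astar s'))))| + |γ * ε| := habs_sub _ _
          _ = γ * |∑ s', P s a b s' * (QL k s' (astar s') (bk k s' (astar s')) -
              Q1star s' (astar s') (bk k s' (astar s')))| + γ * ε := by
              rw [abs_mul, abs_mul, abs_of_nonneg hγ0, abs_of_nonneg hε.le]
      have hmul := mul_le_mul_of_nonneg_left hSabs hγ0
      have hkey := hDkey k
      linarith
  -- sandwich: QL k ≤ Q1 k ≤ QU k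
  have sandwich : ∀ k s a b, QL k s a b ≤ Q1 k s a b ∧ Q1 k s a b ≤ QU k s a b := by
    intro k
    induction k with
    | zero => exact hinit
    | succ k ih =>
      intro s a b
      have hdiff : Q1 (k + 1) s a b - Q1star s a b =
          γ * ∑ s', P s a b s' * (Q1 k s' (ak k s') (bk k s' (ak k s')) -
            Q1star s' (astar s') (bstar s' (astar s'))) := by
        rw [hQ1rec k s a b, hstarrec s a b]
        have h : ∑ s', P s a b s' * (Q1 k s' (ak k s') (bk k s' (ak k s')) -
            Q1star s' (astar s') (bstar s' (astar s'))) =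
            (∑ s', P s a b s' * Q1 k s' (ak k s') (bk k s' (ak k s'))) -
            ∑ s', P s a b s' * Q1star s' (astar s') (bstar s' (astar s')) := by
          rw [← Finset.sum_sub_distrib]
          exact Finset.sum_congr rfl fun s' _ => by ring
        rw [h]
        ring
      constructor
      · -- lower: QL (k+1) ≤ Q1 (k+1)
        have hLrec := hQLrec k s a b
        have hterm : ∀ s', (QL k s' (astar s') (bk k s' (astar s')) -
            Q1star s' (astar s') (bk k s' (astar s'))) - ε ≤
            Q1 k s' (ak k s') (bk k s' (ak k s')) -
            Q1star s' (astar s') (bstar s' (astar s')) := by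
          intro s'
          have t1 := hak k s' (astar s')
          have t2 := (ih s' (astar s') (bk k s' (astar s'))).1
          have t3 := hrelaxstar s' (fun s => bk k s (astar s))
          linarith
        have hsum : (∑ s', P s a b s' * (QL k s' (astar s') (bk k s' (astar s')) -
            Q1star s' (astar s') (bk k s' (astar s')))) - ε ≤
            ∑ s', P s a b s' * (Q1 k s' (ak k s') (bk k s' (ak k s')) -
            Q1star s' (astar s') (bstar s' (astar s'))) := by
          have h1 : (∑ s', P s a b s' * ((QL k s' (astar s') (bk k s' (astar s')) -
              Q1star s' (astar s') (bk k s' (astar s'))) - ε)) ≤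
              ∑ s', P s a b s' * (Q1 k s' (ak k s') (bk k s' (ak k s')) -
              Q1star s' (astar s') (bstar s' (astar s'))) :=
            Finset.sum_le_sum fun s' _ =>
              mul_le_mul_of_nonneg_left (hterm s') (hPnn s a b s')
          have h2 : (∑ s', P s a b s' * ((QL k s' (astar s') (bk k s' (astar s')) -
              Q1star s' (astar s') (bk k s' (astar s'))) - ε)) =
              (∑ s', P s a b s' * (QL k s' (astar s') (bk k s' (astar s')) -
              Q1star s' (astar s') (bk k s' (astar s')))) - ε := by
            have e : ∑ s', P s a b s' * ((QL k s' (astar s') (bk k s' (astar s')) -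
                Q1star s' (astar s') (bk k s' (astar s'))) - ε) =
                ∑ s', (P s a b s' * (QL k s' (astar s') (bk k s' (astar s')) -
                Q1star s' (astar s') (bk k s' (astar s'))) - P s a b s' * ε) :=
              Finset.sum_congr rfl fun s' _ => by ring
            rw [e, Finset.sum_sub_distrib, ← Finset.sum_mul, hPsum s a b, one_mul]
          linarith [h2 ▸ h1]
        have hmul := mul_le_mul_of_nonneg_left hsum hγ0
        rw [mul_sub] at hmul
        linarith
      · -- upper: Q1 (k+1) ≤ QU (k+1)
        have hUrec := hQUrec k s a b
        have hterm : ∀ s', Q1 k s' (ak k s') (bk k s' (ak k s')) -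
            Q1star s' (astar s') (bstar s' (astar s')) ≤
            (QU k s' (ak k s') (bstar s' (ak k s')) -
            Q1star s' (ak k s') (bstar s' (ak k s'))) + ε := by
          intro s'
          have t1 := hrelax k s' (fun s => bstar s (ak k s))
          have t2 := (ih s' (ak k s') (bstar s' (ak k s'))).2
          have t3 := hastar s' (ak k s')
          linarith
        have hsum : (∑ s', P s a b s' * (Q1 k s' (ak k s') (bk k s' (ak k s')) -
            Q1star s' (astar s') (bstar s' (astar s')))) ≤
            (∑ s', P s a b s' * (QU k s' (ak k s') (bstar s' (ak k s')) -
            Q1star s' (ak k s') (bstar s' (ak k s')))) + ε := by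
          have h1 : (∑ s', P s a b s' * (Q1 k s' (ak k s') (bk k s' (ak k s')) -
              Q1star s' (astar s') (bstar s' (astar s')))) ≤
              ∑ s', P s a b s' * ((QU k s' (ak k s') (bstar s' (ak k s')) -
              Q1star s' (ak k s') (bstar s' (ak k s'))) + ε) :=
            Finset.sum_le_sum fun s' _ =>
              mul_le_mul_of_nonneg_left (hterm s') (hPnn s a b s')
          have h2 : (∑ s', P s a b s' * ((QU k s' (ak k s') (bstar s' (ak k s')) -
              Q1star s' (ak k s') (bstar s' (ak k s'))) + ε)) =
              (∑ s', P s a b s' * (QU k s' (ak k s') (bstar s' (ak k s')) -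
              Q1star s' (ak k s') (bstar s' (ak k s')))) + ε := by
            have e : ∑ s', P s a b s' * ((QU k s' (ak k s') (bstar s' (ak k s')) -
                Q1star s' (ak k s') (bstar s' (ak k s'))) + ε) =
                ∑ s', (P s a b s' * (QU k s' (ak k s') (bstar s' (ak k s')) -
                Q1star s' (ak k s') (bstar s' (ak k s'))) + P s a b s' * ε) :=
              Finset.sum_congr rfl fun s' _ => by ring
            rw [e, Finset.sum_add_distrib, ← Finset.sum_mul, hPsum s a b, one_mul]
          linarith [h2 ▸ h1]
        have hmul := mul_le_mul_of_nonneg_left hsum hγ0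
        rw [mul_add] at hmul
        linarith
  -- conclusion
  intro k s a b
  have h1 := (sandwich k s a b).1
  have h2 := (sandwich k s a b).2
  have h3 := (abs_le.mp (boundU k s a b)).2
  have h4 := (abs_le.mp (boundL k s a b)).1
  have hgk : 0 ≤ γ ^ k / (1 - γ) := div_nonneg (pow_nonneg hγ0 k) h1γ.le
  have hdle : (6 / (1 - γ)) * γ ^ k + 3 * ε / (1 - γ) -
      (2 / (1 - γ) * γ ^ k + ε / (1 - γ)) =
      4 * (γ ^ k / (1 - γ)) + 2 * (ε / (1 - γ)) := by ring
  rw [abs_le]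
  constructor
  · linarith
  · linarith
end
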